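/- For all real numbers x ≥ 0 and y ≥ 0 one has 2·g(x,0)·[Φ(x) − Φ(x−y)] ≤ f(x,y) ≤ 2·g(x,y)·[Φ(x) − Φ(x−y)]. -/

import Mathlib

/-!
Differentiating in `y` gives `∂_y f(x, y) = 2 φ(x - y) g(x, y)`, while
`∂_y (Φ(x) - Φ(x - y)) = φ(x - y)`.
For `x ≥ 0` the map `t ↦ g(x, t) = 1 - x R(x + t)` is nondecreasing, because the Mills ratio
`R = Φ̄ / φ` is decreasing: `R' = u R - 1 ≤ 0` is the tail bound `u Φ̄(u) ≤ φ(u)`.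
Comparing derivatives on `[0, y]`, with `g(x, ·)` frozen at `0` or at `y`, gives the two bounds
since `f(x, 0) = 0`.
-/

open Real Filter MeasureTheory

/-- Standard normal density. -/
noncomputable def stdPhi (u : ℝ) : ℝ := (Real.sqrt (2 * Real.pi))⁻¹ * Real.exp (-u ^ 2 / 2)

/-- Standard normal distribution function. -/
noncomputable def stdCdf (u : ℝ) : ℝ := ∫ s in Set.Iic u, stdPhi s

/-- Standard normal survivor function. -/
noncomputable def stdSurv (u : ℝ) : ℝ := 1 - stdCdf u

noncomputable def fFun (x y : ℝ) : ℝ := stdSurv (x - y) - Real.exp (2 * x * y) * stdSurv (x + y)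

noncomputable def gFun (x y : ℝ) : ℝ := 1 - x * stdSurv (x + y) / stdPhi (x + y)

open Set ProbabilityTheory

theorem sub_le_sub_of_hasDerivAt_of_le {u v u' v' : ℝ → ℝ} {a b : ℝ} (hab : a ≤ b)
    (hu : ∀ t ∈ Icc a b, HasDerivAt u (u' t) t) (hv : ∀ t ∈ Icc a b, HasDerivAt v (v' t) t)
    (hle : ∀ t ∈ Icc a b, u' t ≤ v' t) : u b - u a ≤ v b - v a := by
  have hmono : MonotoneOn (v - u) (Icc a b) := by
    refine monotoneOn_of_hasDerivWithinAt_nonneg (f' := v' - u') (convex_Icc a b)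
      (fun t ht ↦ ((hv t ht).sub (hu t ht)).continuousAt.continuousWithinAt)
      (fun t ht ↦ ?_) (fun t ht ↦ ?_)
    · exact ((hv t (interior_subset ht)).sub (hu t (interior_subset ht))).hasDerivWithinAt
    · exact sub_nonneg.2 (hle t (interior_subset ht))
  have := hmono (left_mem_Icc.2 hab) (right_mem_Icc.2 hab) hab
  simp only [Pi.sub_apply] at this
  linarith

theorem stdPhi_eq_gaussianPDFReal : stdPhi = gaussianPDFReal 0 1 := by
  ext u
  simp [stdPhi, gaussianPDFReal]

theorem stdPhi_pos (u : ℝ) : 0 < stdPhi u := by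
  rw [stdPhi_eq_gaussianPDFReal]
  exact gaussianPDFReal_pos 0 1 u one_ne_zero

theorem integrable_stdPhi : Integrable stdPhi := by
  rw [stdPhi_eq_gaussianPDFReal]
  exact integrable_gaussianPDFReal 0 1

theorem continuous_stdPhi : Continuous stdPhi := by
  unfold stdPhi
  fun_prop

theorem hasDerivAt_stdPhi (u : ℝ) : HasDerivAt stdPhi (-u * stdPhi u) u := by
  have hexponent : HasDerivAt (fun v : ℝ ↦ -v ^ 2 / 2) (-u) u := by
    simpa using ((hasDerivAt_pow 2 u).neg.div_const 2).congr_deriv (by norm_num; ring)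
  unfold stdPhi
  exact (hexponent.exp.const_mul _).congr_deriv (by ring)

theorem integrable_mul_stdPhi : Integrable fun s ↦ s * stdPhi s := by
  refine ((integrable_mul_exp_neg_mul_sq (by norm_num : (0 : ℝ) < 2⁻¹)).const_mul
    (√(2 * π))⁻¹).congr (Eventually.of_forall fun s ↦ ?_)
  simp only [stdPhi, div_eq_inv_mul, mul_neg, neg_mul, mul_left_comm]

theorem integral_Ioi_mul_stdPhi (u : ℝ) : ∫ s in Ioi u, s * stdPhi s = stdPhi u := by
  have hderiv : ∀ s, HasDerivAt (fun s ↦ -stdPhi s) (s * stdPhi s) s := fun s ↦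
    (hasDerivAt_stdPhi s).neg.congr_deriv (by ring)
  have hlim : Tendsto stdPhi atTop (nhds 0) :=
    tendsto_zero_of_hasDerivAt_of_integrableOn_Ioi (a := 0) (fun s _ ↦ hasDerivAt_stdPhi s)
      (integrable_mul_stdPhi.neg.integrableOn.congr_fun (fun s _ ↦ by simp [neg_mul])
        measurableSet_Ioi) integrable_stdPhi.integrableOn
  have := integral_Ioi_of_hasDerivAt_of_tendsto' (a := u) (fun s _ ↦ hderiv s)
    integrable_mul_stdPhi.integrableOn (by simpa using hlim.neg)
  simpa using this

theorem stdSurv_eq_integral_Ioi (u : ℝ) : stdSurv u = ∫ s in Ioi u, stdPhi s := by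
  have h := intervalIntegral.integral_Iic_add_Ioi (μ := volume) (b := u)
    integrable_stdPhi.integrableOn integrable_stdPhi.integrableOn
  rw [stdPhi_eq_gaussianPDFReal, integral_gaussianPDFReal_eq_one 0 one_ne_zero,
    ← stdPhi_eq_gaussianPDFReal] at h
  unfold stdSurv stdCdf
  linarith

theorem hasDerivAt_stdCdf (u : ℝ) : HasDerivAt stdCdf (stdPhi u) u := by
  have h : HasDerivAt (fun v ↦ stdCdf 0 + ∫ s in (0 : ℝ)..v, stdPhi s) (stdPhi u) u :=
    (intervalIntegral.integral_hasDerivAt_right integrable_stdPhi.intervalIntegrable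
      (continuous_stdPhi.stronglyMeasurableAtFilter _ _) continuous_stdPhi.continuousAt).const_add _
  refine h.congr_of_eventuallyEq (Eventually.of_forall fun v ↦ ?_)
  show stdCdf v = stdCdf 0 + _
  rw [← intervalIntegral.integral_Iic_sub_Iic integrable_stdPhi.integrableOn
    integrable_stdPhi.integrableOn]
  simp only [stdCdf]
  ring

theorem hasDerivAt_stdSurv (u : ℝ) : HasDerivAt stdSurv (-stdPhi u) u :=
  (hasDerivAt_stdCdf u).const_sub 1

theorem stdSurv_nonneg (u : ℝ) : 0 ≤ stdSurv u :=
  stdSurv_eq_integral_Ioi u ▸ setIntegral_nonneg measurableSet_Ioi fun s _ ↦ (stdPhi_pos s).le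

theorem mul_stdSurv_le_stdPhi (u : ℝ) : u * stdSurv u ≤ stdPhi u := by
  rcases le_or_gt u 0 with hu | hu
  · exact (mul_nonpos_of_nonpos_of_nonneg hu (stdSurv_nonneg u)).trans (stdPhi_pos u).le
  · rw [stdSurv_eq_integral_Ioi, ← integral_const_mul, ← integral_Ioi_mul_stdPhi u]
    exact setIntegral_mono_on (integrable_stdPhi.integrableOn.const_mul u)
      integrable_mul_stdPhi.integrableOn measurableSet_Ioi
      fun s hs ↦ mul_le_mul_of_nonneg_right (le_of_lt hs) (stdPhi_pos s).le

noncomputable def millsRatio (u : ℝ) : ℝ := stdSurv u / stdPhi u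

theorem hasDerivAt_millsRatio (u : ℝ) : HasDerivAt millsRatio (u * millsRatio u - 1) u := by
  have hφ := (stdPhi_pos u).ne'
  refine ((hasDerivAt_stdSurv u).div (hasDerivAt_stdPhi u) hφ).congr_deriv ?_
  unfold millsRatio
  field_simp
  ring

theorem antitone_millsRatio : Antitone millsRatio := by
  refine antitone_of_hasDerivAt_nonpos hasDerivAt_millsRatio fun u ↦ ?_
  show u * millsRatio u - 1 ≤ 0
  have : u * millsRatio u ≤ 1 := by
    rw [millsRatio, mul_div_assoc', div_le_one (stdPhi_pos u)]
    exact mul_stdSurv_le_stdPhi u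
  linarith

theorem gFun_eq (x y : ℝ) : gFun x y = 1 - x * millsRatio (x + y) := by
  rw [gFun, millsRatio, mul_div_assoc]

theorem monotone_gFun {x : ℝ} (hx : 0 ≤ x) : Monotone (gFun x) := fun a b hab ↦ by
  simp only [gFun_eq]
  linarith [mul_le_mul_of_nonneg_left (antitone_millsRatio (by linarith : x + a ≤ x + b)) hx]

theorem exp_mul_stdPhi_add (x t : ℝ) : exp (2 * x * t) * stdPhi (x + t) = stdPhi (x - t) := by
  unfold stdPhi
  rw [mul_left_comm, ← exp_add]
  ring_nf

theorem hasDerivAt_fFun (x t : ℝ) :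
    HasDerivAt (fFun x) (2 * stdPhi (x - t) * gFun x t) t := by
  have hsub := (hasDerivAt_stdSurv (x - t)).comp t ((hasDerivAt_id t).const_sub x)
  have hadd := (hasDerivAt_stdSurv (x + t)).comp t ((hasDerivAt_id t).const_add x)
  have hexp := ((hasDerivAt_id t).const_mul (2 * x)).exp
  refine (hsub.sub (hexp.mul hadd)).congr_deriv ?_
  have hφ := (stdPhi_pos (x + t)).ne'
  rw [← exp_mul_stdPhi_add, gFun]
  field_simp
  simp only [Function.comp_apply, id]
  ring

theorem hasDerivAt_stdCdf_sub (x t : ℝ) :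
    HasDerivAt (fun t ↦ stdCdf x - stdCdf (x - t)) (stdPhi (x - t)) t := by
  have := ((hasDerivAt_stdCdf (x - t)).comp t ((hasDerivAt_id t).const_sub x)).const_sub (stdCdf x)
  simpa using this

theorem fFun_zero (x : ℝ) : fFun x 0 = 0 := by
  simp [fFun]

/-- Two-sided estimate for f in the case x ≥ 0. -/
theorem fFun_bounds_of_nonneg (x y : ℝ) (hx : 0 ≤ x) (hy : 0 ≤ y) :
    2 * gFun x 0 * (stdCdf x - stdCdf (x - y)) ≤ fFun x y ∧
      fFun x y ≤ 2 * gFun x y * (stdCdf x - stdCdf (x - y)) := by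
  have hΦ (c : ℝ) (t : ℝ) : HasDerivAt (fun t ↦ 2 * gFun x c * (stdCdf x - stdCdf (x - t)))
      (2 * stdPhi (x - t) * gFun x c) t :=
    ((hasDerivAt_stdCdf_sub x t).const_mul _).congr_deriv (by ring)
  constructor
  · have := sub_le_sub_of_hasDerivAt_of_le hy (fun t _ ↦ hΦ 0 t)
      (fun t _ ↦ hasDerivAt_fFun x t) fun t ht ↦
        mul_le_mul_of_nonneg_left (monotone_gFun hx ht.1) (by linarith [stdPhi_pos (x - t)])
    simpa [fFun_zero] using this
  · have := sub_le_sub_of_hasDerivAt_of_le hy (fun t _ ↦ hasDerivAt_fFun x t)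
      (fun t _ ↦ hΦ y t) fun t ht ↦
        mul_le_mul_of_nonneg_left (monotone_gFun hx ht.2) (by linarith [stdPhi_pos (x - t)])
    simpa [fFun_zero] using this
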